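/- arXiv:1309.4020 — 3 statements merged into one kernel-verified Lean document; each statement's English description precedes it below -/
import Mathlib

section
/- The pointwise product of two C²-finite sequences over ℂ is C²-finite. -/
set_option maxHeartbeats 1000000

open Filter

def IsCFinite {F : Type*} [Field F] (a : ℕ → F) : Prop :=
  ∃ s : ℕ, ∃ c : Fin s → F,
    ∀ n : ℕ, s ≤ n → a (n + s) = ∑ i : Fin s, c i * a (n + i)

def IsC2Finite (a : ℕ → ℂ) : Prop :=
  ∃ s : ℕ, ∃ c : Fin (s + 1) → ℕ → ℂ,
    (∀ i, IsCFinite (c i)) ∧ (∀ n, c (Fin.last s) n ≠ 0) ∧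
    ∀ n : ℕ, s ≤ n →
      c (Fin.last s) n * a (n + s) = ∑ i : Fin s, c i.castSucc n * a (n + i)

noncomputable section C2Aux

abbrev GG := (atTop : Filter ℕ).Germ ℂ

instance : Algebra ℂ GG where
  smul := (· • ·)
  algebraMap := ((Filter.Germ.coeRingHom (atTop : Filter ℕ)).comp (Pi.constRingHom ℕ ℂ))
  commutes' := fun c x => mul_comm _ _
  smul_def' := fun c x => by induction x using Filter.Germ.inductionOn with | h f => rfl

def σa : GG →ₐ[ℂ] GG where
  toFun g := g.compTendsto (fun n => n + 1) (tendsto_add_atTop_nat 1)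
  map_one' := rfl
  map_mul' x y := by
    induction x using Filter.Germ.inductionOn with | h f =>
    induction y using Filter.Germ.inductionOn with | h g => rfl
  map_zero' := rfl
  map_add' x y := by
    induction x using Filter.Germ.inductionOn with | h f =>
    induction y using Filter.Germ.inductionOn with | h g => rfl
  commutes' c := rfl

theorem σa_coe (f : ℕ → ℂ) : σa (↑f : GG) = ↑(fun n => f (n + 1)) := rfl

def σk : ℕ → (GG →ₐ[ℂ] GG)
  | 0 => AlgHom.id ℂ GG
  | k + 1 => σa.comp (σk k)

theorem σk_succ_apply (k : ℕ) (x : GG) : σk (k + 1) x = σa (σk k x) := rfl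

theorem σk_coe (k : ℕ) (f : ℕ → ℂ) : σk k (↑f : GG) = ↑(fun n => f (n + k)) := by
  induction k with
  | zero => rfl
  | succ k ih =>
      rw [σk_succ_apply, ih, σa_coe]
      exact congrArg _ (funext fun n => congrArg f (by omega))

theorem coe_sum {ι : Type*} (s : Finset ι) (F : ι → ℕ → ℂ) :
    ((↑(fun n => ∑ i ∈ s, F i n) : GG)) = ∑ i ∈ s, (↑(F i) : GG) := by
  have : (fun n => ∑ i ∈ s, F i n) = ∑ i ∈ s, F i := by
    funext n; simp [Finset.sum_apply]
  rw [this]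
  exact map_sum (Filter.Germ.coeRingHom (atTop : Filter ℕ)) F s

theorem isCFinite_shift (f : ℕ → ℂ) (j : ℕ) (h : IsCFinite f) :
    IsCFinite fun n => f (n + j) := by
  obtain ⟨s, c, hc⟩ := h
  refine ⟨s, c, fun n hn => ?_⟩
  show f (n + s + j) = _
  have := hc (n + j) (le_trans hn (Nat.le_add_right _ _))
  have e : ∀ m : ℕ, n + m + j = n + j + m := fun m => by omega
  rw [e s, this]
  exact Finset.sum_congr rfl fun i _ => congrArg (c i * ·) (congrArg f (e i).symm)

theorem isCFinite_zero : IsCFinite (fun _ : ℕ => (0 : ℂ)) :=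
  ⟨0, fun i => i.elim0, fun n _ => by simp⟩

theorem isCFinite_of_eventually (f : ℕ → ℂ) (r N : ℕ) (γ : Fin r → ℂ)
    (h : ∀ n, N ≤ n → f (n + r) = ∑ i : Fin r, γ i * f (n + i)) : IsCFinite f := by
  set γ' : ℕ → ℂ := fun m => if hm : m < r then γ ⟨m, hm⟩ else 0 with hγ'
  refine ⟨N + r, fun j => if N ≤ (j : ℕ) then γ' ((j : ℕ) - N) else 0, fun n hn => ?_⟩
  have h1 := h (n + N) (by omega)
  have hL : f (n + (N + r)) = f (n + N + r) := by rw [Nat.add_assoc]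
  rw [hL, h1]
  have hγeq : ∀ i : Fin r, γ i = γ' (i : ℕ) := fun i => by simp [hγ', i.isLt]
  have hzero : ∑ j ∈ Finset.Ico 0 N, (if N ≤ j then γ' (j - N) else 0) * f (n + j) = 0 := by
    apply Finset.sum_eq_zero
    intro j hj
    rw [Finset.mem_Ico] at hj
    rw [if_neg (by omega), zero_mul]
  have hR : ∑ j : Fin (N + r), (if N ≤ (j : ℕ) then γ' ((j : ℕ) - N) else 0) * f (n + j)
      = ∑ m ∈ Finset.range r, γ' m * f (n + N + m) := by
    rw [Fin.sum_univ_eq_sum_range (fun j => (if N ≤ j then γ' (j - N) else 0) * f (n + j)) (N + r)]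
    rw [Finset.range_eq_Ico, ← Finset.sum_Ico_consecutive _ (Nat.zero_le N) (Nat.le_add_right N r),
      hzero, zero_add, Finset.sum_Ico_eq_sum_range]
    simp only [Nat.add_sub_cancel_left, ← Finset.range_eq_Ico]
    exact Finset.sum_congr rfl fun m hm =>
      by rw [if_pos (Nat.le_add_right N m), Nat.add_assoc]
  rw [hR, ← Fin.sum_univ_eq_sum_range (fun m => γ' m * f (n + N + m)) r]
  exact Finset.sum_congr rfl fun i _ => by rw [hγeq i]


def Stb (V : Submodule ℂ GG) : Prop := ∀ x ∈ V, σa x ∈ V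

def RecG (g : GG) : Prop := ∃ V : Submodule ℂ GG, V.FG ∧ Stb V ∧ g ∈ V

theorem stb_span_one : Stb (Submodule.span ℂ {(1 : GG)}) := by
  intro x hx
  obtain ⟨c, rfl⟩ := Submodule.mem_span_singleton.1 hx
  rw [map_smul, map_one]
  exact Submodule.smul_mem _ _ (Submodule.subset_span rfl)

theorem recG_one_smul (c : ℂ) : RecG (algebraMap ℂ GG c) := by
  refine ⟨Submodule.span ℂ {(1 : GG)}, Submodule.fg_span_singleton _, stb_span_one, ?_⟩
  have : algebraMap ℂ GG c = c • (1 : GG) := by rw [Algebra.smul_def, mul_one]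
  rw [this]
  exact Submodule.smul_mem _ _ (Submodule.subset_span rfl)

def RecAlg : Subalgebra ℂ GG where
  carrier := {g | RecG g}
  mul_mem' := by
    rintro x y ⟨V, hVf, hVs, hxV⟩ ⟨W, hWf, hWs, hyW⟩
    refine ⟨V * W, hVf.mul hWf, ?_, Submodule.mul_mem_mul hxV hyW⟩
    intro z hz
    refine Submodule.mul_induction_on hz (fun m hm n hn => ?_) (fun u v hu hv => ?_)
    · rw [map_mul]; exact Submodule.mul_mem_mul (hVs _ hm) (hWs _ hn)
    · rw [map_add]; exact add_mem hu hv
  one_mem' := by simpa using recG_one_smul 1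
  add_mem' := by
    rintro x y ⟨V, hVf, hVs, hxV⟩ ⟨W, hWf, hWs, hyW⟩
    refine ⟨V ⊔ W, hVf.sup hWf, ?_, ?_⟩
    · intro z hz
      obtain ⟨u, hu, v, hv, rfl⟩ := Submodule.mem_sup.1 hz
      rw [map_add]
      exact add_mem (Submodule.mem_sup_left (hVs _ hu)) (Submodule.mem_sup_right (hWs _ hv))
    · exact add_mem (Submodule.mem_sup_left hxV) (Submodule.mem_sup_right hyW)
  zero_mem' := ⟨⊥, Submodule.fg_bot, fun x hx => by
      rw [Submodule.mem_bot] at hx; rw [hx, map_zero]; exact Submodule.zero_mem _,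
    Submodule.zero_mem _⟩
  algebraMap_mem' := recG_one_smul

theorem recG_of_isCFinite (f : ℕ → ℂ) (hf : IsCFinite f) : RecG ↑f := by
  obtain ⟨s, c, hc⟩ := hf
  have hrel : σk s ↑f = ∑ i : Fin s, c i • σk (i : ℕ) (↑f : GG) := by
    rw [σk_coe]
    have h1 : (fun n => f (n + s)) =ᶠ[atTop] (fun n => ∑ i : Fin s, c i * f (n + i)) :=
      eventually_atTop.2 ⟨s, hc⟩
    rw [show ((↑(fun n => f (n + s)) : GG)) = ↑(fun n => ∑ i : Fin s, c i * f (n + i)) from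
      (Filter.Germ.coe_eq).2 h1]
    rw [coe_sum]
    exact Finset.sum_congr rfl fun i _ => by rw [σk_coe]; rfl
  by_cases hs : s = 0
  · subst hs
    have h0 : (↑f : GG) = 0 := by simpa [σk] using hrel
    exact ⟨⊥, Submodule.fg_bot, fun x hx => by
        rw [Submodule.mem_bot] at hx; rw [hx, map_zero]; exact Submodule.zero_mem _,
      by rw [h0]; exact Submodule.zero_mem _⟩
  · refine ⟨Submodule.span ℂ (Set.range fun i : Fin s => σk (i : ℕ) ↑f),
      Submodule.fg_span (Set.finite_range _), ?_,
      Submodule.subset_span ⟨⟨0, Nat.pos_of_ne_zero hs⟩, rfl⟩⟩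
    intro x hx
    refine Submodule.span_induction ?_ ?_ ?_ ?_ hx
    · rintro y ⟨i, rfl⟩
      by_cases hi : (i : ℕ) + 1 < s
      · exact Submodule.subset_span ⟨⟨(i : ℕ) + 1, hi⟩, rfl⟩
      · have hieq : (i : ℕ) + 1 = s := by have := i.isLt; omega
        have h4 : σa (σk (i : ℕ) (↑f : GG)) = σk ((i : ℕ) + 1) ↑f := rfl
        rw [h4, hieq, hrel]
        exact Submodule.sum_mem _ fun j _ =>
          Submodule.smul_mem _ _ (Submodule.subset_span ⟨j, rfl⟩)
    · rw [map_zero]; exact Submodule.zero_mem _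
    · intro u v hu hv hpu hpv; rw [map_add]; exact add_mem hpu hpv
    · intro t u hu hpu; rw [map_smul]; exact Submodule.smul_mem _ _ hpu

theorem exists_mem_span_prev {R M : Type*} [CommRing R] [AddCommGroup M] [Module R M]
    [IsNoetherianRing R] (W : Submodule R M) (hW : W.FG) (v : ℕ → M) (hv : ∀ k, v k ∈ W) :
    ∃ r, v r ∈ Submodule.span R (v '' Set.Iio r) := by
  haveI : IsNoetherian R W := isNoetherian_of_fg_of_noetherian W hW
  set u : ℕ → W := fun k => (⟨v k, hv k⟩ : W) with hu
  have mono : Monotone fun r => Submodule.span R (u '' Set.Iio r) := fun r r' h =>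
    Submodule.span_mono (Set.image_mono fun x hx => lt_of_lt_of_le hx h)
  obtain ⟨n, hn⟩ := monotone_stabilizes_iff_noetherian.2 ‹IsNoetherian R W› ⟨_, mono⟩
  have h1 : u n ∈ Submodule.span R (u '' Set.Iio (n + 1)) :=
    Submodule.subset_span ⟨n, Nat.lt_succ_self n, rfl⟩
  have h2 : u n ∈ Submodule.span R (u '' Set.Iio n) := by
    rw [show Submodule.span R (u '' Set.Iio n) = Submodule.span R (u '' Set.Iio (n + 1)) from
      hn (n + 1) (Nat.le_succ n)]
    exact h1
  refine ⟨n, ?_⟩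
  have h3 : W.subtype (u n) ∈ Submodule.map W.subtype (Submodule.span R (u '' Set.Iio n)) :=
    Submodule.mem_map_of_mem h2
  rw [Submodule.map_span, ← Set.image_comp] at h3
  exact h3

theorem isCFinite_of_recG (f : ℕ → ℂ) (h : RecG ↑f) : IsCFinite f := by
  obtain ⟨V, hFG, hStb, hmem⟩ := h
  have hall : ∀ k, σk k (↑f : GG) ∈ V := by
    intro k
    induction k with
    | zero => exact hmem
    | succ k ih => rw [σk_succ_apply]; exact hStb _ ih
  obtain ⟨r, hr⟩ := exists_mem_span_prev V hFG (fun k => σk k ↑f) hall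
  have himg : ((fun k => σk k (↑f : GG)) '' Set.Iio r) =
      Set.range (fun i : Fin r => σk (i : ℕ) ↑f) := by
    ext x
    constructor
    · rintro ⟨k, hk, rfl⟩; exact ⟨⟨k, hk⟩, rfl⟩
    · rintro ⟨i, rfl⟩; exact ⟨(i : ℕ), i.isLt, rfl⟩
  rw [himg] at hr
  obtain ⟨γ, hγ⟩ := (Submodule.mem_span_range_iff_exists_fun ℂ).1 hr
  have hco : (↑(fun n => f (n + r)) : GG) = ↑(fun n => ∑ i : Fin r, γ i * f (n + i)) := by
    rw [coe_sum, ← σk_coe]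
    rw [← hγ]
    exact Finset.sum_congr rfl fun i _ => by rw [σk_coe]; rfl
  obtain ⟨N, hN⟩ := eventually_atTop.1 ((Filter.Germ.coe_eq).1 hco)
  exact isCFinite_of_eventually f r N γ hN


theorem isC2Finite_of_eventually (p : ℕ → ℂ) (r N : ℕ) (d : Fin (r + 1) → ℕ → ℂ)
    (hcf : ∀ k, IsCFinite (d k)) (hnz : ∀ n, N ≤ n → d (Fin.last r) n ≠ 0)
    (hrec : ∀ n, N ≤ n →
      d (Fin.last r) n * p (n + r) = ∑ k : Fin r, d k.castSucc n * p (n + k)) :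
    IsC2Finite p := by
  set d' : ℕ → ℕ → ℂ := fun m => if hm : m < r + 1 then d ⟨m, hm⟩ else (fun _ => 0) with hd'
  have hd'r : d' r = d (Fin.last r) := by
    rw [hd']; simp only [Nat.lt_succ_self, dif_pos]; rfl
  refine ⟨N + r, fun i n => if N ≤ (i : ℕ) then d' ((i : ℕ) - N) (n + N) else 0, ?_, ?_, ?_⟩
  · intro i
    by_cases hi : N ≤ (i : ℕ)
    · simp only [hi, if_true]
      have hfin : IsCFinite (d' ((i : ℕ) - N)) := by
        by_cases hm : (i : ℕ) - N < r + 1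
        · rw [hd']; simp only [hm, dif_pos]; exact hcf _
        · rw [hd']; simp only [hm, dif_neg, not_false_iff]; exact isCFinite_zero
      exact isCFinite_shift _ N hfin
    · simp only [hi, if_false]; exact isCFinite_zero
  · intro n
    have hlast : ((Fin.last (N + r) : Fin (N + r + 1)) : ℕ) = N + r := rfl
    simp only [hlast, if_pos (Nat.le_add_right N r), Nat.add_sub_cancel_left, hd'r]
    exact hnz (n + N) (Nat.le_add_left N n)
  · intro n hn
    have hlast : ((Fin.last (N + r) : Fin (N + r + 1)) : ℕ) = N + r := rfl
    simp only [hlast, if_pos (Nat.le_add_right N r), Nat.add_sub_cancel_left, hd'r]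
    have hL : n + (N + r) = (n + N) + r := by omega
    rw [hL, hrec (n + N) (Nat.le_add_left N n)]
    have hcast : ∀ i : Fin (N + r), ((i.castSucc : Fin (N + r + 1)) : ℕ) = (i : ℕ) :=
      fun i => rfl
    simp only [hcast]
    have hzero : ∑ j ∈ Finset.Ico 0 N,
        (if N ≤ j then d' (j - N) (n + N) else 0) * p (n + j) = 0 := by
      apply Finset.sum_eq_zero
      intro j hj
      rw [Finset.mem_Ico] at hj
      rw [if_neg (by omega), zero_mul]
    have hR : ∑ j : Fin (N + r), (if N ≤ (j : ℕ) then d' ((j : ℕ) - N) (n + N) else 0) * p (n + j)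
        = ∑ m ∈ Finset.range r, d' m (n + N) * p (n + (N + m)) := by
      rw [Fin.sum_univ_eq_sum_range
        (fun j => (if N ≤ j then d' (j - N) (n + N) else 0) * p (n + j)) (N + r)]
      rw [Finset.range_eq_Ico, ← Finset.sum_Ico_consecutive _ (Nat.zero_le N) (Nat.le_add_right N r),
        hzero, zero_add, Finset.sum_Ico_eq_sum_range]
      simp only [Nat.add_sub_cancel_left, ← Finset.range_eq_Ico]
      exact Finset.sum_congr rfl fun m hm => by rw [if_pos (Nat.le_add_right N m)]
    rw [hR, ← Fin.sum_univ_eq_sum_range (fun m => d' m (n + N) * p (n + (N + m))) r]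
    refine Finset.sum_congr rfl fun k _ => ?_
    have h1 : d' (k : ℕ) = d k.castSucc := by
      rw [hd']; simp only [Nat.lt_succ_of_lt k.isLt, dif_pos]
      congr 1
    have h2 : n + N + (k : ℕ) = n + (N + (k : ℕ)) := by omega
    rw [h1, h2]


theorem isUnit_coe_of_nonzero (f : ℕ → ℂ) (hf : ∀ n, f n ≠ 0) : IsUnit (↑f : GG) := by
  refine IsUnit.of_mul_eq_one (↑(fun n => (f n)⁻¹) : GG) ?_
  have h : (fun n => f n * (f n)⁻¹) =ᶠ[atTop] (fun _ => (1 : ℂ)) :=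
    Eventually.of_forall fun n => mul_inv_cancel₀ (hf n)
  exact (Filter.Germ.coe_eq).2 h

theorem exists_rep (x : GG) : ∃ f : ℕ → ℂ, (↑f : GG) = x :=
  x.inductionOn fun f => ⟨f, rfl⟩

theorem eventually_ne_zero_of_isUnit (f : ℕ → ℂ) (h : IsUnit (↑f : GG)) :
    ∃ N, ∀ n, N ≤ n → f n ≠ 0 := by
  obtain ⟨w, hw⟩ := h
  obtain ⟨v, hv⟩ := exists_rep ((w⁻¹ : GGˣ) : GG)
  have h1 : (↑f : GG) * ↑v = 1 := by rw [← hw, hv]; exact w.mul_inv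
  have h1' : (↑(fun n => f n * v n) : GG) = ↑(fun _ : ℕ => (1 : ℂ)) := h1
  have h2 : (fun n => f n * v n) =ᶠ[atTop] (fun _ => (1 : ℂ)) := (Filter.Germ.coe_eq).1 h1' 
  obtain ⟨N, hN⟩ := eventually_atTop.1 h2
  refine ⟨N, fun n hn hz => ?_⟩
  have h3 : f n * v n = 1 := hN n hn
  rw [hz, zero_mul] at h3
  exact zero_ne_one h3

theorem shift_mem_span (B' : Subalgebra ℂ GG) (hσB' : ∀ x ∈ B', σa x ∈ B')
    (g : GG) (s : ℕ) (e : Fin s → GG) (he : ∀ i, e i ∈ B')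
    (hrel : σk s g = ∑ i : Fin s, e i * σk (i : ℕ) g) :
    ∀ k, σk k g ∈ Submodule.span B' (Set.range fun i : Fin s => σk (i : ℕ) g) := by
  set T := Submodule.span B' (Set.range fun i : Fin s => σk (i : ℕ) g) with hT
  have hmem : σk s g ∈ T := by
    rw [hrel]
    refine Submodule.sum_mem _ fun i _ => ?_
    have h1 : e i * σk (i : ℕ) g = (⟨e i, he i⟩ : B') • σk (i : ℕ) g := rfl
    rw [h1]
    exact Submodule.smul_mem _ _ (Submodule.subset_span ⟨i, rfl⟩)
  have hstb : ∀ x ∈ T, σa x ∈ T := by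
    intro x hx
    refine Submodule.span_induction ?_ ?_ ?_ ?_ hx
    · rintro y ⟨i, rfl⟩
      by_cases hi : (i : ℕ) + 1 < s
      · exact Submodule.subset_span ⟨⟨(i : ℕ) + 1, hi⟩, rfl⟩
      · have hieq : (i : ℕ) + 1 = s := by have := i.isLt; omega
        have h4 : σa (σk (i : ℕ) g) = σk ((i : ℕ) + 1) g := rfl
        rw [h4, hieq]; exact hmem
    · rw [map_zero]; exact Submodule.zero_mem _
    · intro x₁ x₂ h1 h2 hp1 hp2; rw [map_add]; exact add_mem hp1 hp2
    · intro t x₁ h1 hp1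
      have h5 : σa (t • x₁) = (⟨σa (t : GG), hσB' _ t.2⟩ : B') • σa x₁ := by
        show σa ((t : GG) * x₁) = σa (t : GG) * σa x₁
        rw [map_mul]
      rw [h5]; exact Submodule.smul_mem _ _ hp1
  intro k
  induction k with
  | zero =>
      by_cases h0 : 0 < s
      · exact Submodule.subset_span ⟨⟨0, h0⟩, rfl⟩
      · have hs0 : s = 0 := by omega
        subst hs0; exact hmem
  | succ k ih => rw [σk_succ_apply]; exact hstb _ ih

end C2Aux

theorem c2finite_mul (a b : ℕ → ℂ) (ha : IsC2Finite a) (hb : IsC2Finite b) :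
    IsC2Finite (fun n => a n * b n) := by
  classical
  obtain ⟨sa, ca, hacf, hanz, harec⟩ := ha
  obtain ⟨sb, cb, hbcf, hbnz, hbrec⟩ := hb
  choose Va hVaFG hVaStb hVamem using fun i : Fin (sa + 1) => recG_of_isCFinite (ca i) (hacf i)
  choose Vb hVbFG hVbStb hVbmem using fun i : Fin (sb + 1) => recG_of_isCFinite (cb i) (hbcf i)
  set V : Submodule ℂ GG := (⨆ i, Va i) ⊔ (⨆ i, Vb i) with hV
  have hVFG : V.FG := (Submodule.fg_iSup _ hVaFG).sup (Submodule.fg_iSup _ hVbFG)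
  have hVStb : Stb V := by
    intro x hx
    obtain ⟨y, hy, z, hz, rfl⟩ := Submodule.mem_sup.1 hx
    rw [map_add]
    refine add_mem (Submodule.mem_sup_left ?_) (Submodule.mem_sup_right ?_)
    · exact Submodule.iSup_induction (motive := fun w => σa w ∈ ⨆ i, Va i) _ hy
        (fun i w hw => Submodule.mem_iSup_of_mem i (hVaStb i w hw))
        (by show σa (0 : GG) ∈ ⨆ i, Va i; rw [map_zero]; exact Submodule.zero_mem _)
        (fun w₁ w₂ h1 h2 => by
          show σa (w₁ + w₂) ∈ ⨆ i, Va i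
          rw [map_add]; exact add_mem h1 h2)
    · exact Submodule.iSup_induction (motive := fun w => σa w ∈ ⨆ i, Vb i) _ hz
        (fun i w hw => Submodule.mem_iSup_of_mem i (hVbStb i w hw))
        (by show σa (0 : GG) ∈ ⨆ i, Vb i; rw [map_zero]; exact Submodule.zero_mem _)
        (fun w₁ w₂ h1 h2 => by
          show σa (w₁ + w₂) ∈ ⨆ i, Vb i
          rw [map_add]; exact add_mem h1 h2)
  have hVca : ∀ i, (↑(ca i) : GG) ∈ V :=
    fun i => Submodule.mem_sup_left (Submodule.mem_iSup_of_mem i (hVamem i))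
  have hVcb : ∀ i, (↑(cb i) : GG) ∈ V :=
    fun i => Submodule.mem_sup_right (Submodule.mem_iSup_of_mem i (hVbmem i))
  set B : Subalgebra ℂ GG := Algebra.adjoin ℂ (V : Set GG) with hB
  have hVB : (V : Set GG) ⊆ B := Algebra.subset_adjoin
  have hBrec : ∀ x ∈ B, RecG x := by
    intro x hx
    have hle : B ≤ RecAlg := Algebra.adjoin_le fun y hy => ⟨V, hVFG, hVStb, hy⟩
    exact hle hx
  have hσB : ∀ x ∈ B, σa x ∈ B := by
    intro x hx
    have hmap : B.map σa ≤ B := by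
      rw [hB, AlgHom.map_adjoin]
      exact Algebra.adjoin_le fun y hy => by
        obtain ⟨z, hz, rfl⟩ := hy
        exact Algebra.subset_adjoin (hVStb z hz)
    exact hmap ⟨x, hx, rfl⟩
  have hBfg : B.FG := by
    obtain ⟨T, hT⟩ := hVFG
    rw [hB, ← hT, Algebra.adjoin_span]
    exact Subalgebra.fg_adjoin_finset T
  haveI hBft : Algebra.FiniteType ℂ B := (Subalgebra.fg_iff_finiteType B).1 hBfg
  haveI hNB : IsNoetherianRing B := Algebra.FiniteType.isNoetherianRing ℂ B
  set S : Submonoid B :=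
    { carrier := {u : B | IsUnit (u : GG)}
      one_mem' := by simp
      mul_mem' := fun hx hy => hx.mul hy } with hS
  haveI hNL : IsNoetherianRing (Localization S) := IsLocalization.isNoetherianRing S _ hNB
  have hunits : ∀ s : S, IsUnit ((B.val : B →ₐ[ℂ] GG).toRingHom s) := fun s => s.2
  set φ0 : Localization S →+* GG := IsLocalization.lift hunits with hφ0
  set B' : Subalgebra ℂ GG :=
    { carrier := {x | ∃ u : GG, u ∈ B ∧ IsUnit u ∧ u * x ∈ B}
      mul_mem' := by
        rintro x y ⟨u, hu, huU, hux⟩ ⟨v, hv, hvU, hvy⟩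
        exact ⟨u * v, mul_mem hu hv, huU.mul hvU, by
          rw [show u * v * (x * y) = (u * x) * (v * y) by ring]; exact mul_mem hux hvy⟩
      one_mem' := ⟨1, one_mem B, isUnit_one, by rw [mul_one]; exact one_mem B⟩
      add_mem' := by
        rintro x y ⟨u, hu, huU, hux⟩ ⟨v, hv, hvU, hvy⟩
        exact ⟨u * v, mul_mem hu hv, huU.mul hvU, by
          rw [show u * v * (x + y) = v * (u * x) + u * (v * y) by ring]
          exact add_mem (mul_mem hv hux) (mul_mem hu hvy)⟩
      zero_mem' := ⟨1, one_mem B, isUnit_one, by rw [mul_zero]; exact zero_mem B⟩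
      algebraMap_mem' := fun c =>
        ⟨1, one_mem B, isUnit_one, by rw [one_mul]; exact B.algebraMap_mem c⟩ } with hB'
  have hBB' : ∀ x ∈ B, x ∈ B' :=
    fun x hx => ⟨1, one_mem B, isUnit_one, by rw [one_mul]; exact hx⟩
  have hσB' : ∀ x ∈ B', σa x ∈ B' := by
    rintro x ⟨u, huB, huU, hux⟩
    exact ⟨σa u, hσB u huB, huU.map σa, by rw [← map_mul]; exact hσB _ hux⟩
  have himg : ∀ y : Localization S, φ0 y ∈ B' := by
    intro y
    obtain ⟨⟨x, s⟩, hy⟩ := IsLocalization.mk'_surjective S y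
    change IsLocalization.mk' (Localization S) x s = y at hy
    subst hy
    have h5 : ((x : B) : GG)
        = (((s : S) : B) : GG) * φ0 (IsLocalization.mk' (Localization S) x s) :=
      (IsLocalization.lift_mk'_spec (hg := hunits) x
        (φ0 (IsLocalization.mk' (Localization S) x s)) s).1 rfl
    exact ⟨(((s : S) : B) : GG), ((s : S) : B).2, s.2, by rw [← h5]; exact x.2⟩
  set ψ : Localization S →+* B' :=
    { toFun := fun y => ⟨φ0 y, himg y⟩
      map_one' := Subtype.ext φ0.map_one
      map_mul' := fun x y => Subtype.ext (φ0.map_mul x y)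
      map_zero' := Subtype.ext φ0.map_zero
      map_add' := fun x y => Subtype.ext (φ0.map_add x y) } with hψ
  have hψsurj : Function.Surjective ψ := by
    rintro ⟨x, u, huB, huU, hux⟩
    refine ⟨IsLocalization.mk' (Localization S) (⟨u * x, hux⟩ : B) (⟨⟨u, huB⟩, huU⟩ : S), ?_⟩
    apply Subtype.ext
    show φ0 _ = x
    have h5 : (B.val : B →ₐ[ℂ] GG).toRingHom (⟨u * x, hux⟩ : B)
        = (B.val : B →ₐ[ℂ] GG).toRingHom ((⟨⟨u, huB⟩, huU⟩ : S) : B)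
          * φ0 (IsLocalization.mk' (Localization S) (⟨u * x, hux⟩ : B) (⟨⟨u, huB⟩, huU⟩ : S)) :=
      (IsLocalization.lift_mk'_spec _ _ _ _).1 rfl
    have h6 : u * x = u * φ0 (IsLocalization.mk' (Localization S) (⟨u * x, hux⟩ : B)
      (⟨⟨u, huB⟩, huU⟩ : S)) := h5
    exact (huU.mul_left_cancel h6).symm
  haveI hNB' : IsNoetherianRing B' := isNoetherianRing_of_surjective (Localization S) B' ψ hψsurj
  -- germ level recurrences
  set Ag : GG := ↑a with hAg
  set Bgg : GG := ↑b with hBgg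
  have harelg : (↑(ca (Fin.last sa)) : GG) * σk sa Ag
      = ∑ i : Fin sa, (↑(ca i.castSucc) : GG) * σk (i : ℕ) Ag := by
    have h1 : (fun n => ca (Fin.last sa) n * a (n + sa))
        =ᶠ[atTop] (fun n => ∑ i : Fin sa, ca i.castSucc n * a (n + i)) :=
      eventually_atTop.2 ⟨sa, harec⟩
    calc (↑(ca (Fin.last sa)) : GG) * σk sa Ag
        = ↑(fun n => ca (Fin.last sa) n * a (n + sa)) := by rw [hAg, σk_coe]; rfl
      _ = ↑(fun n => ∑ i : Fin sa, ca i.castSucc n * a (n + i)) := (Filter.Germ.coe_eq).2 h1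
      _ = ∑ i : Fin sa, (↑(ca i.castSucc) : GG) * σk (i : ℕ) Ag := by
          rw [coe_sum]
          exact Finset.sum_congr rfl fun i _ => by rw [hAg, σk_coe]; rfl
  have hbrelg : (↑(cb (Fin.last sb)) : GG) * σk sb Bgg
      = ∑ i : Fin sb, (↑(cb i.castSucc) : GG) * σk (i : ℕ) Bgg := by
    have h1 : (fun n => cb (Fin.last sb) n * b (n + sb))
        =ᶠ[atTop] (fun n => ∑ i : Fin sb, cb i.castSucc n * b (n + i)) :=
      eventually_atTop.2 ⟨sb, hbrec⟩
    calc (↑(cb (Fin.last sb)) : GG) * σk sb Bgg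
        = ↑(fun n => cb (Fin.last sb) n * b (n + sb)) := by rw [hBgg, σk_coe]; rfl
      _ = ↑(fun n => ∑ i : Fin sb, cb i.castSucc n * b (n + i)) := (Filter.Germ.coe_eq).2 h1
      _ = ∑ i : Fin sb, (↑(cb i.castSucc) : GG) * σk (i : ℕ) Bgg := by
          rw [coe_sum]
          exact Finset.sum_congr rfl fun i _ => by rw [hBgg, σk_coe]; rfl
  have hclaU : IsUnit (↑(ca (Fin.last sa)) : GG) := isUnit_coe_of_nonzero _ hanz
  have hclbU : IsUnit (↑(cb (Fin.last sb)) : GG) := isUnit_coe_of_nonzero _ hbnz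
  obtain ⟨cua, hcua⟩ := hclaU
  obtain ⟨cub, hcub⟩ := hclbU
  -- coefficients in B'
  have heA : ∀ i : Fin sa, ((cua⁻¹ : GGˣ) : GG) * (↑(ca i.castSucc) : GG) ∈ B' := by
    intro i
    refine ⟨(↑(ca (Fin.last sa)) : GG), hVB (hVca _), isUnit_coe_of_nonzero _ hanz, ?_⟩
    rw [← hcua, ← mul_assoc, Units.mul_inv, one_mul]
    exact hVB (hVca i.castSucc)
  have heB : ∀ i : Fin sb, ((cub⁻¹ : GGˣ) : GG) * (↑(cb i.castSucc) : GG) ∈ B' := by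
    intro i
    refine ⟨(↑(cb (Fin.last sb)) : GG), hVB (hVcb _), isUnit_coe_of_nonzero _ hbnz, ?_⟩
    rw [← hcub, ← mul_assoc, Units.mul_inv, one_mul]
    exact hVB (hVcb i.castSucc)
  have hrelA : σk sa Ag = ∑ i : Fin sa, (((cua⁻¹ : GGˣ) : GG) * ↑(ca i.castSucc)) * σk (i : ℕ) Ag := by
    have h1 : ((cua⁻¹ : GGˣ) : GG) * ((↑(ca (Fin.last sa)) : GG) * σk sa Ag) = σk sa Ag := by
      rw [← hcua, ← mul_assoc, Units.inv_mul, one_mul]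
    rw [← h1, harelg, Finset.mul_sum]
    exact Finset.sum_congr rfl fun i _ => by ring
  have hrelB : σk sb Bgg = ∑ i : Fin sb, (((cub⁻¹ : GGˣ) : GG) * ↑(cb i.castSucc)) * σk (i : ℕ) Bgg := by
    have h1 : ((cub⁻¹ : GGˣ) : GG) * ((↑(cb (Fin.last sb)) : GG) * σk sb Bgg) = σk sb Bgg := by
      rw [← hcub, ← mul_assoc, Units.inv_mul, one_mul]
    rw [← h1, hbrelg, Finset.mul_sum]
    exact Finset.sum_congr rfl fun i _ => by ring
  have hAk := shift_mem_span B' hσB' Ag sa _ heA hrelA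
  have hBk := shift_mem_span B' hσB' Bgg sb _ heB hrelB
  -- product module
  set p : ℕ → ℂ := fun n => a n * b n with hp
  set Pg : GG := ↑p with hPg
  have hPgm : Pg = Ag * Bgg := rfl
  set M0 : Submodule B' GG :=
    Submodule.span B' (Set.range fun q : Fin sa × Fin sb => σk (q.1 : ℕ) Ag * σk (q.2 : ℕ) Bgg)
    with hM0
  have hM0fg : M0.FG := Submodule.fg_span (Set.finite_range _)
  have hPk : ∀ k, σk k Pg ∈ M0 := by
    intro k
    have h1 : σk k Pg = σk k Ag * σk k Bgg := by rw [hPgm, map_mul]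
    have h3 : Submodule.span B' (Set.range fun i : Fin sa => σk (i : ℕ) Ag) *
        Submodule.span B' (Set.range fun i : Fin sb => σk (i : ℕ) Bgg) ≤ M0 := by
      rw [Submodule.span_mul_span]
      refine Submodule.span_le.2 ?_
      rintro x hx
      obtain ⟨y, hy, z, hz, rfl⟩ := Set.mem_mul.1 hx
      obtain ⟨i, rfl⟩ := hy
      obtain ⟨j, rfl⟩ := hz
      exact Submodule.subset_span ⟨(i, j), rfl⟩
    rw [h1]
    exact h3 (Submodule.mul_mem_mul (hAk k) (hBk k))
  obtain ⟨r, hr⟩ := exists_mem_span_prev M0 hM0fg (fun k => σk k Pg) hPk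
  have himg2 : ((fun k => σk k Pg) '' Set.Iio r) = Set.range (fun i : Fin r => σk (i : ℕ) Pg) := by
    ext x
    constructor
    · rintro ⟨k, hk, rfl⟩; exact ⟨⟨k, hk⟩, rfl⟩
    · rintro ⟨i, rfl⟩; exact ⟨(i : ℕ), i.isLt, rfl⟩
  rw [himg2] at hr
  obtain ⟨e, he⟩ := (Submodule.mem_span_range_iff_exists_fun B').1 hr
  -- clear denominators
  have hB'prop : ∀ k : Fin r, ∃ u : GG, u ∈ B ∧ IsUnit u ∧ u * ↑(e k) ∈ B := fun k => (e k).2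
  choose u huB huU hue using hB'prop
  choose cu hcu using huU
  set gG : GG := ∏ k, u k with hgG
  have hgB : gG ∈ B := prod_mem fun k _ => huB k
  have hgU : IsUnit gG := by
    have h1 : gG = ((∏ k, cu k : GGˣ) : GG) := by
      rw [hgG]
      have h2 : ((∏ k, cu k : GGˣ) : GG) = ∏ k, ((cu k : GGˣ) : GG) :=
        map_prod (Units.coeHom GG) _ _
      rw [h2]
      exact Finset.prod_congr rfl fun k _ => (hcu k).symm
    rw [h1]
    exact Units.isUnit _
  have hkey : gG * σk r Pg = ∑ k : Fin r,
      ((∏ j ∈ Finset.univ.erase k, u j) * (u k * ↑(e k))) * σk (k : ℕ) Pg := by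
    rw [← he, Finset.mul_sum]
    refine Finset.sum_congr rfl fun k _ => ?_
    have h6 : (e k) • σk (k : ℕ) Pg = ↑(e k) * σk (k : ℕ) Pg := rfl
    rw [h6]
    have h7 : gG = u k * ∏ j ∈ Finset.univ.erase k, u j :=
      (Finset.mul_prod_erase _ _ (Finset.mem_univ k)).symm
    rw [h7]; ring
  have hcoefB : ∀ k : Fin r, (∏ j ∈ Finset.univ.erase k, u j) * (u k * ↑(e k)) ∈ B :=
    fun k => mul_mem (prod_mem fun j _ => huB j) (hue k)
  -- extract sequences
  obtain ⟨gs, hgs⟩ := exists_rep gG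
  have hgsCF : IsCFinite gs := isCFinite_of_recG gs (by rw [hgs]; exact hBrec _ hgB)
  obtain ⟨N1, hN1⟩ := eventually_ne_zero_of_isUnit gs (by rw [hgs]; exact hgU)
  have hreps : ∀ k : Fin r, ∃ f : ℕ → ℂ, (↑f : GG) = (∏ j ∈ Finset.univ.erase k, u j) * (u k * ↑(e k)) :=
    fun k => exists_rep _
  choose hs hhs using hreps
  have hhsCF : ∀ k, IsCFinite (hs k) :=
    fun k => isCFinite_of_recG (hs k) (by rw [hhs k]; exact hBrec _ (hcoefB k))
  -- germ identity to sequences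
  have hgermeq : (↑(fun n => gs n * p (n + r)) : GG)
      = ↑(fun n => ∑ k : Fin r, hs k n * p (n + k)) := by
    have hL : (↑(fun n => gs n * p (n + r)) : GG) = gG * σk r Pg := by
      rw [← hgs, hPg, σk_coe]; rfl
    have hR : (↑(fun n => ∑ k : Fin r, hs k n * p (n + k)) : GG) = ∑ k : Fin r,
        ((∏ j ∈ Finset.univ.erase k, u j) * (u k * ↑(e k))) * σk (k : ℕ) Pg := by
      rw [coe_sum]
      exact Finset.sum_congr rfl fun k _ => by rw [← hhs k, hPg, σk_coe]; rfl
    rw [hL, hR, hkey]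
  obtain ⟨N2, hN2⟩ := eventually_atTop.1 ((Filter.Germ.coe_eq).1 hgermeq)
  set N := max N1 N2 with hN
  set d : Fin (r + 1) → ℕ → ℂ := Fin.snoc hs gs with hd
  refine isC2Finite_of_eventually p r N d ?_ ?_ ?_
  · intro k
    refine Fin.lastCases ?_ ?_ k
    · rw [hd]; simp only [Fin.snoc_last]; exact hgsCF
    · intro i; rw [hd]; simp only [Fin.snoc_castSucc]; exact hhsCF i
  · intro n hn
    rw [hd]; simp only [Fin.snoc_last]
    exact hN1 n (le_trans (le_max_left _ _) hn)
  · intro n hn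
    rw [hd]; simp only [Fin.snoc_last, Fin.snoc_castSucc]
    exact hN2 n (le_trans (le_max_right _ _) hn)
end

section
/- For all sufficiently large n, the Fibonacci numbers satisfy the C²-finite recurrence F_{2n-1} · F_{(n+1)²} = F_{2n}(F_{2n+1} + F_{2n-1}) · F_{n²} + F_{2n+1}(F_{2n-1} F_{2n+1} − F_{2n}²) · F_{(n−1)²}. -/
theorem fib_square_c2_recurrence :
    ∃ N : ℕ, ∀ n : ℕ, N ≤ n →
      (Nat.fib (2 * n - 1) : ℤ) * Nat.fib ((n + 1) ^ 2) =
        (Nat.fib (2 * n) : ℤ) * ((Nat.fib (2 * n + 1) : ℤ) + Nat.fib (2 * n - 1)) *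
            Nat.fib (n ^ 2) +
          (Nat.fib (2 * n + 1) : ℤ) *
            ((Nat.fib (2 * n - 1) : ℤ) * Nat.fib (2 * n + 1) -
              (Nat.fib (2 * n) : ℤ) ^ 2) *
            Nat.fib ((n - 1) ^ 2) := by
  refine ⟨1, ?_⟩
  intro n hn
  obtain ⟨m, rfl⟩ := Nat.exists_eq_add_of_le hn
  have h1 : 2 * (1 + m) - 1 = 2 * m + 1 := by omega
  have h2 : 2 * (1 + m) = 2 * m + 2 := by omega
  have h3 : 2 * (1 + m) + 1 = 2 * m + 3 := by omega
  have h4 : (1 + m - 1) ^ 2 = m ^ 2 := by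
    congr 1; omega
  have h5 : (1 + m) ^ 2 = m ^ 2 + 2 * m + 1 := by ring
  have h6 : (1 + m + 1) ^ 2 = m ^ 2 + 2 * m + 1 + (2 * m + 2) + 1 := by ring
  rw [h1, h3, h2, h4, h5, h6]
  have eb : (Nat.fib (2 * m + 2) : ℤ) = Nat.fib (2 * m) + Nat.fib (2 * m + 1) := by
    rw [Nat.fib_add_two]; push_cast; ring
  have ec : (Nat.fib (2 * m + 3) : ℤ) = Nat.fib (2 * m + 1) + Nat.fib (2 * m + 2) := by
    rw [show 2 * m + 3 = (2 * m + 1) + 2 from rfl, Nat.fib_add_two]; push_cast; ring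
  have eA : (Nat.fib (m ^ 2 + 2 * m + 1) : ℤ) =
      Nat.fib (m ^ 2) * Nat.fib (2 * m) + Nat.fib (m ^ 2 + 1) * Nat.fib (2 * m + 1) := by
    rw [show m ^ 2 + 2 * m + 1 = m ^ 2 + (2 * m) + 1 from rfl, Nat.fib_add]; push_cast; ring
  have eB : (Nat.fib (m ^ 2 + 2 * m + 2) : ℤ) =
      Nat.fib (m ^ 2) * Nat.fib (2 * m + 1) + Nat.fib (m ^ 2 + 1) * Nat.fib (2 * m + 2) := by
    rw [show m ^ 2 + 2 * m + 2 = m ^ 2 + (2 * m + 1) + 1 by ring, Nat.fib_add]; push_cast; ring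
  have eC : (Nat.fib (m ^ 2 + 2 * m + 1 + (2 * m + 2) + 1) : ℤ) =
      Nat.fib (m ^ 2 + 2 * m + 1) * Nat.fib (2 * m + 2) +
        Nat.fib (m ^ 2 + 2 * m + 2) * Nat.fib (2 * m + 3) := by
    rw [Nat.fib_add]; push_cast; ring
  rw [eC, eB, eA, ec, eb]
  ring
end

section
/- For all sufficiently large n, the Fibonacci numbers satisfy F_{n−1} · F_{C(n+1,2)} = (F_{n−1} F_{n+1} + F_n F_{n−2}) · F_{C(n,2)} + (F_n F_{n−1}² − F_{n−2} F_n²) · F_{C(n−1,2)}, where C(n,2) = n(n−1)/2. -/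
lemma choose_two_succ (j : ℕ) : (j + 1).choose 2 = j.choose 2 + j := by
  simp [Nat.choose_succ_succ, Nat.choose_one_right]; omega

theorem fib_binom_c2_recurrence :
    ∃ N : ℕ, ∀ n : ℕ, N ≤ n →
      (Nat.fib (n - 1) : ℤ) * Nat.fib ((n + 1).choose 2) =
        ((Nat.fib (n - 1) : ℤ) * Nat.fib (n + 1) +
            (Nat.fib n : ℤ) * Nat.fib (n - 2)) * Nat.fib (n.choose 2) +
          ((Nat.fib n : ℤ) * (Nat.fib (n - 1) : ℤ) ^ 2 -
              (Nat.fib (n - 2) : ℤ) * (Nat.fib n : ℤ) ^ 2) *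
            Nat.fib ((n - 1).choose 2) := by
  refine ⟨3, fun n hn => ?_⟩
  obtain ⟨k, rfl⟩ : ∃ k, n = k + 3 := ⟨n - 3, by omega⟩
  have e1 : k + 3 - 1 = k + 2 := by omega
  have e2 : k + 3 - 2 = k + 1 := by omega
  rw [e1, e2]
  set m := (k + 2).choose 2 with hm
  have h3 : (k + 3).choose 2 = m + (k + 1) + 1 := by
    rw [show k + 3 = (k + 2) + 1 from rfl, choose_two_succ]; omega
  have h4 : (k + 3 + 1).choose 2 = m + (2 * k + 4) + 1 := by
    rw [show k + 3 + 1 = (k + 3) + 1 from rfl, choose_two_succ,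
      show k + 3 = (k + 2) + 1 from rfl, choose_two_succ]; omega
  have f1 : Nat.fib (2 * k + 4) = Nat.fib (k + 1) * Nat.fib (k + 2)
      + Nat.fib (k + 2) * Nat.fib (k + 3) := by
    rw [show 2 * k + 4 = (k + 1) + (k + 2) + 1 from by omega, Nat.fib_add]
  have f2 : Nat.fib (2 * k + 4 + 1) = Nat.fib (k + 2) * Nat.fib (k + 2)
      + Nat.fib (k + 3) * Nat.fib (k + 3) := by
    rw [show 2 * k + 4 + 1 = (k + 2) + (k + 2) + 1 from by omega, Nat.fib_add]
  have f3 : Nat.fib (k + 3) = Nat.fib (k + 1) + Nat.fib (k + 2) := Nat.fib_add_two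
  have f4 : Nat.fib (k + 3 + 1) = Nat.fib (k + 2) + Nat.fib (k + 3) := Nat.fib_add_two
  rw [h3, h4, Nat.fib_add m (2 * k + 4), Nat.fib_add m (k + 1), f1, f2, f4, f3]
  push_cast
  ring
end
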